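/- (Theorem 2.1.) Let N and s be positive natural numbers, and work in ℝ^N with the standard inner product ⟨·,·⟩. Let D : ℝ^N → ℝ^N be a symmetric linear map (⟨D v, w⟩ = ⟨v, D w⟩ for all v, w). Let τ ∈ ℝ, let a : Fin s → Fin s → ℝ and b : Fin s → ℝ be Runge–Kutta coefficients satisfying the symplectic condition bᵢ aᵢⱼ + bⱼ aⱼᵢ = bᵢ bⱼ for all i, j. For each i, let Gᵢ : ℝ^N → ℝ^N be a linear map with ⟨Gᵢ v, v⟩ = 0 for all v ∈ ℝ^N. Suppose uⁿ, uⁿ⁺¹ ∈ ℝ^N and stage values uᵢ, kᵢ ∈ ℝ^N (i = 1,…,s) satisfy D kᵢ = Gᵢ uᵢ, uᵢ = uⁿ + τ Σⱼ aᵢⱼ kⱼ, and uⁿ⁺¹ = uⁿ + τ Σᵢ bᵢ kᵢ. Then ½⟨D uⁿ⁺¹, uⁿ⁺¹⟩ = ½⟨D uⁿ, uⁿ⟩. -/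

import Mathlib

/-! The stage equations say `⟪D kᵢ, uᵢ⟫ = ⟪Gᵢ uᵢ, uᵢ⟫ = 0`, so writing `uⁿ = uᵢ - τ Σⱼ aᵢⱼ kⱼ` gives
`⟪D kᵢ, uⁿ⟫ = -τ Σⱼ aᵢⱼ ⟪D kᵢ, kⱼ⟫`. Expanding the quadratic form `⟪D uⁿ⁺¹, uⁿ⁺¹⟫` around `uⁿ`,
the change over one step is `τ² Σᵢⱼ (bᵢbⱼ - 2 bᵢaᵢⱼ) ⟪D kᵢ, kⱼ⟫`, and this vanishes because the
Gram matrix `⟪D kᵢ, kⱼ⟫` is symmetric while the symplectic condition makes `bᵢbⱼ - bᵢaᵢⱼ - bⱼaⱼᵢ` zero. -/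

open scoped RealInnerProductSpace
open Finset

theorem two_mul_sum_mul_sum_eq_of_symplectic {R ι : Type*} [CommRing R] [Fintype ι]
    {a q : ι → ι → R} {b : ι → R} (hsym : ∀ i j, b i * a i j + b j * a j i = b i * b j)
    (hq : ∀ i j, q i j = q j i) :
    2 * ∑ i, b i * ∑ j, a i j * q i j = ∑ i, b i * ∑ j, b j * q i j := by
  have hswap : ∑ i, ∑ j, b j * a j i * q i j = ∑ i, ∑ j, b i * a i j * q i j := by
    rw [sum_comm]
    exact sum_congr rfl fun i _ => sum_congr rfl fun j _ => by rw [hq]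
  calc 2 * ∑ i, b i * ∑ j, a i j * q i j
      = ∑ i, ∑ j, b i * a i j * q i j + ∑ i, ∑ j, b j * a j i * q i j := by
        rw [hswap, ← two_mul]; simp only [mul_sum, mul_assoc]
    _ = ∑ i, ∑ j, (b i * a i j + b j * a j i) * q i j := by
        simp only [← sum_add_distrib, add_mul]
    _ = ∑ i, b i * ∑ j, b j * q i j := by
        simp only [hsym, mul_sum, mul_assoc]

section InnerProductSpace

variable {E ι : Type*} [NormedAddCommGroup E] [InnerProductSpace ℝ E] [Fintype ι]

theorem LinearMap.IsSymmetric.inner_map_add_smul_self {D : E →ₗ[ℝ] E} (hD : D.IsSymmetric)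
    (u w : E) (τ : ℝ) :
    ⟪D (u + τ • w), u + τ • w⟫ = ⟪D u, u⟫ + 2 * τ * ⟪D w, u⟫ + τ ^ 2 * ⟪D w, w⟫ := by
  have hcross : ⟪D u, w⟫ = ⟪D w, u⟫ := by rw [hD, real_inner_comm]
  simp only [map_add, map_smul, inner_add_left, inner_add_right, real_inner_smul_left,
    real_inner_smul_right, hcross]
  ring

theorem inner_map_sum_smul (D : E →ₗ[ℝ] E) (b : ι → ℝ) (k : ι → E) (v : E) :
    ⟪D (∑ i, b i • k i), v⟫ = ∑ i, b i * ⟪D (k i), v⟫ := by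
  simp only [map_sum, map_smul, sum_inner, real_inner_smul_left]

end InnerProductSpace

theorem scheme21_momentum_conservation
    (N s : ℕ)
    (D : EuclideanSpace ℝ (Fin N) →ₗ[ℝ] EuclideanSpace ℝ (Fin N))
    (hD : ∀ v w : EuclideanSpace ℝ (Fin N), ⟪D v, w⟫ = ⟪v, D w⟫)
    (τ : ℝ) (a : Fin s → Fin s → ℝ) (b : Fin s → ℝ)
    (hsym : ∀ i j, b i * a i j + b j * a j i = b i * b j)
    (G : Fin s → (EuclideanSpace ℝ (Fin N) →ₗ[ℝ] EuclideanSpace ℝ (Fin N)))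
    (hG : ∀ i (v : EuclideanSpace ℝ (Fin N)), ⟪G i v, v⟫ = 0)
    (un un1 : EuclideanSpace ℝ (Fin N)) (uS kS : Fin s → EuclideanSpace ℝ (Fin N))
    (hk : ∀ i, D (kS i) = G i (uS i))
    (hstage : ∀ i, uS i = un + τ • ∑ j, a i j • kS j)
    (hnext : un1 = un + τ • ∑ i, b i • kS i) :
    (1/2 : ℝ) * ⟪D un1, un1⟫ = (1/2 : ℝ) * ⟪D un, un⟫ := by
  have hinner_un : ∀ i, ⟪D (kS i), un⟫ = -τ * ∑ j, a i j * ⟪D (kS i), kS j⟫ := by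
    intro i
    have h : ⟪D (kS i), uS i⟫ = 0 := by rw [hk, hG]
    rw [hstage i, inner_add_right, real_inner_smul_right, inner_sum] at h
    simp only [real_inner_smul_right] at h
    linarith
  have hsymplectic := two_mul_sum_mul_sum_eq_of_symplectic hsym
    (q := fun i j => ⟪D (kS i), kS j⟫) fun i j => by rw [hD, real_inner_comm]
  rw [hnext, LinearMap.IsSymmetric.inner_map_add_smul_self hD, inner_map_sum_smul,
    inner_map_sum_smul]
  simp only [inner_sum, real_inner_smul_right, hinner_un, mul_left_comm _ (-τ), ← mul_sum]
  linear_combination -τ ^ 2 / 2 * hsymplectic
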